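/- Let A = (a_ij) be an n×n symmetrically reciprocal matrix with positive entries. Then its tropical spectral radius satisfies λ(A) ≥ 1, and λ(A) = 1 if and only if A is consistent, i.e. a_ij = a_ik·a_kj for all i, j, k. -/

import Mathlib

/-- Max-times matrix product: `(A ⊗ B)_ik = max_j a_ij · b_jk`. -/
noncomputable def tMul {n : ℕ} (A B : Matrix (Fin n) (Fin n) ℝ) : Matrix (Fin n) (Fin n) ℝ :=
  fun i k => ⨆ j, A i j * B j k

/-- Max-times matrix powers, with `A^⊗0 = I`. -/
noncomputable def tPow {n : ℕ} (A : Matrix (Fin n) (Fin n) ℝ) : ℕ → Matrix (Fin n) (Fin n) ℝ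
  | 0 => fun i j => if i = j then 1 else 0
  | (k + 1) => tMul A (tPow A k)

/-- Tropical trace: `tr A = max_i a_ii`. -/
noncomputable def tTr {n : ℕ} (A : Matrix (Fin n) (Fin n) ℝ) : ℝ :=
  ⨆ i, A i i

/-- Tropical spectral radius: `λ(A) = max_{1 ≤ k ≤ n} (tr (A^⊗k))^(1/k)`. -/
noncomputable def tRadius {n : ℕ} (A : Matrix (Fin n) (Fin n) ℝ) : ℝ :=
  ⨆ k : Fin n, (tTr (tPow A ((k : ℕ) + 1))) ^ ((1 : ℝ) / ((k : ℕ) + 1))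

/-!
The lower bound is the `k = 1` term of `λ(A)`, since reciprocity forces `a_ii = 1`.
If `λ(A) = 1`, then every 3-cycle product `a_ij a_jk a_ki` is at most `tr (A^⊗3) ≤ λ(A)^3 = 1`
(a cycle through a repeated index has product `1` by reciprocity, and three distinct indices
need `n ≥ 3`), and by reciprocity the two inequalities `a_ij a_jk a_ki ≤ 1` and
`a_ik a_kj a_ji ≤ 1` say exactly `a_ij = a_ik a_kj`. Conversely a consistent `A` satisfies
`A ⊗ A = A`, so all its tropical powers equal `A`, whose tropical trace is `1`.
-/

lemma three_le_of_pairwise_ne {n : ℕ} {i j k : Fin n} (hij : i ≠ j) (hjk : j ≠ k) (hki : k ≠ i) :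
    3 ≤ n := by
  have := i.isLt; have := j.isLt; have := k.isLt
  have := Fin.val_ne_of_ne hij; have := Fin.val_ne_of_ne hjk; have := Fin.val_ne_of_ne hki
  omega

section Tropical

variable {n : ℕ} (A : Matrix (Fin n) (Fin n) ℝ)

lemma le_tPow_succ_apply (m : ℕ) (i j k : Fin n) :
    A i j * tPow A m j k ≤ tPow A (m + 1) i k :=
  le_ciSup (f := fun j => A i j * tPow A m j k) (Set.finite_range _).bddAbove j

lemma tPow_nonneg (hA : ∀ i j, 0 ≤ A i j) (m : ℕ) (i j : Fin n) : 0 ≤ tPow A m i j := by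
  induction m generalizing i j with
  | zero => unfold tPow; split_ifs <;> norm_num
  | succ m ih => exact (mul_nonneg (hA i j) (ih j j)).trans (le_tPow_succ_apply A m i j j)

lemma tPow_one (hA : ∀ i j, 0 ≤ A i j) : tPow A 1 = A := by
  ext i k
  have : Nonempty (Fin n) := ⟨i⟩
  refine le_antisymm (ciSup_le fun j => ?_) (by simpa [tPow] using le_tPow_succ_apply A 0 i k k)
  by_cases h : j = k
  · simp [tPow, h]
  · simp [tPow, h, hA i k]

lemma mul_mul_le_tPow_three (hA : ∀ i j, 0 ≤ A i j) (i j k : Fin n) :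
    A i j * A j k * A k i ≤ tPow A 3 i i := by
  have h2 : A j k * A k i ≤ tPow A 2 j i := by
    simpa [tPow_one A hA] using le_tPow_succ_apply A 1 j k i
  calc A i j * A j k * A k i = A i j * (A j k * A k i) := mul_assoc ..
    _ ≤ A i j * tPow A 2 j i := mul_le_mul_of_nonneg_left h2 (hA i j)
    _ ≤ tPow A 3 i i := le_tPow_succ_apply A 2 i j i

lemma tMul_self_of_consistent (hcons : ∀ i j k, A i j = A i k * A k j) : tMul A A = A := by
  ext i k
  have : Nonempty (Fin n) := ⟨i⟩
  simp only [tMul, ← hcons, ciSup_const]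

lemma tPow_succ_of_tMul_self (hA : ∀ i j, 0 ≤ A i j) (h : tMul A A = A) (m : ℕ) :
    tPow A (m + 1) = A := by
  induction m with
  | zero => exact tPow_one A hA
  | succ m ih => rw [tPow, ih, h]

lemma le_tTr (i : Fin n) : A i i ≤ tTr A :=
  le_ciSup (f := fun i => A i i) (Set.finite_range _).bddAbove i

lemma le_tRadius (k : Fin n) :
    tTr (tPow A ((k : ℕ) + 1)) ^ ((1 : ℝ) / ((k : ℕ) + 1)) ≤ tRadius A :=
  le_ciSup (f := fun k : Fin n => tTr (tPow A ((k : ℕ) + 1)) ^ ((1 : ℝ) / ((k : ℕ) + 1)))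
    (Set.finite_range _).bddAbove k

lemma tTr_tPow_le_tRadius_pow (hA : ∀ i j, 0 ≤ A i j) (k : Fin n) :
    tTr (tPow A ((k : ℕ) + 1)) ≤ tRadius A ^ ((k : ℕ) + 1) := by
  have htr : 0 ≤ tTr (tPow A ((k : ℕ) + 1)) := (tPow_nonneg A hA _ k k).trans (le_tTr _ k)
  have hroot := le_tRadius A k
  rw [one_div, ← Nat.cast_succ] at hroot
  calc tTr (tPow A ((k : ℕ) + 1))
      = (tTr (tPow A ((k : ℕ) + 1)) ^ (((k + 1 : ℕ) : ℝ)⁻¹)) ^ ((k : ℕ) + 1) :=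
        (Real.rpow_inv_natCast_pow htr k.val.succ_ne_zero).symm
    _ ≤ tRadius A ^ ((k : ℕ) + 1) := pow_le_pow_left₀ (Real.rpow_nonneg htr _) hroot _

lemma tRadius_nonneg (hA : ∀ i j, 0 ≤ A i j) : 0 ≤ tRadius A :=
  Real.iSup_nonneg fun k => Real.rpow_nonneg
    ((tPow_nonneg A hA _ k k).trans (le_tTr _ k)) _

lemma mul_mul_le_tRadius_pow_three (hA : ∀ i j, 0 ≤ A i j) (hn : 3 ≤ n) (i j k : Fin n) :
    A i j * A j k * A k i ≤ tRadius A ^ 3 :=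
  (mul_mul_le_tPow_three A hA i j k).trans
    ((le_tTr _ i).trans (tTr_tPow_le_tRadius_pow A hA ⟨2, hn⟩))

lemma one_le_tRadius (hA : ∀ i j, 0 ≤ A i j) (hdiag : ∀ i, A i i = 1) (hn : 1 ≤ n) :
    1 ≤ tRadius A := by
  have : Nonempty (Fin n) := ⟨⟨0, hn⟩⟩
  simpa [tPow_one A hA, tTr, hdiag] using le_tRadius A ⟨0, hn⟩

lemma tRadius_eq_one_of_consistent [Nonempty (Fin n)] (hA : ∀ i j, 0 ≤ A i j)
    (hdiag : ∀ i, A i i = 1) (hcons : ∀ i j k, A i j = A i k * A k j) : tRadius A = 1 := by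
  simp [tRadius, tPow_succ_of_tMul_self A hA (tMul_self_of_consistent A hcons), tTr, hdiag]

end Tropical

section Reciprocal

variable {n : ℕ} {A : Matrix (Fin n) (Fin n) ℝ} (hA : ∀ i j, 0 < A i j)
  (hrec : ∀ i j, A j i = 1 / A i j)
include hA hrec

lemma mul_apply_swap_eq_one (i j : Fin n) : A i j * A j i = 1 := by
  rw [hrec i j, mul_one_div_cancel (hA i j).ne']

lemma diag_eq_one_of_reciprocal (i : Fin n) : A i i = 1 :=
  (mul_self_eq_one_iff.mp (mul_apply_swap_eq_one hA hrec i i)).resolve_right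
    (by linarith [hA i i])

lemma consistent_of_cycle_le_one (h : ∀ i j k, A i j * A j k * A k i ≤ 1) (i j k : Fin n) :
    A i j = A i k * A k j := by
  have hup := h i j k
  have hlow := h i k j
  rw [hrec k j, hrec i k, mul_one_div, mul_one_div, div_div,
    div_le_one (mul_pos (hA k j) (hA i k)), mul_comm (A k j)] at hup
  rw [hrec i j, mul_one_div, div_le_one (hA i j)] at hlow
  exact le_antisymm hup hlow

lemma consistent_of_tRadius_le_one (h : tRadius A ≤ 1) (i j k : Fin n) :
    A i j = A i k * A k j := by
  refine consistent_of_cycle_le_one hA hrec (fun i j k => ?_) i j k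
  have hdiag := diag_eq_one_of_reciprocal hA hrec
  have hswap := mul_apply_swap_eq_one hA hrec
  rcases eq_or_ne i j with rfl | hij
  · rw [hdiag, one_mul, hswap]
  rcases eq_or_ne j k with rfl | hjk
  · rw [hdiag, mul_one, hswap]
  rcases eq_or_ne k i with rfl | hki
  · rw [hdiag, mul_one, hswap]
  have hA0 : ∀ i j, 0 ≤ A i j := fun i j => (hA i j).le
  calc A i j * A j k * A k i
      ≤ tRadius A ^ 3 := mul_mul_le_tRadius_pow_three A hA0 (three_le_of_pairwise_ne hij hjk hki) i j k
    _ ≤ 1 := pow_le_one₀ (tRadius_nonneg A hA0) h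

end Reciprocal

/-- For a symmetrically reciprocal positive matrix `A`, the tropical spectral
radius satisfies `λ(A) ≥ 1`, with equality if and only if `A` is consistent,
i.e. `a_ij = a_ik · a_kj` for all `i, j, k`. -/
theorem tRadius_ge_one_and_eq_one_iff_consistent (n : ℕ) (hn : 1 ≤ n)
    (A : Matrix (Fin n) (Fin n) ℝ) (hA : ∀ i j, 0 < A i j)
    (hrec : ∀ i j, A j i = 1 / A i j) :
    1 ≤ tRadius A ∧ (tRadius A = 1 ↔ ∀ i j k, A i j = A i k * A k j) := by
  have hA0 : ∀ i j, 0 ≤ A i j := fun i j => (hA i j).le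
  have hdiag := diag_eq_one_of_reciprocal hA hrec
  have : Nonempty (Fin n) := ⟨⟨0, hn⟩⟩
  exact ⟨one_le_tRadius A hA0 hdiag hn,
    fun h => consistent_of_tRadius_le_one hA hrec h.le,
    tRadius_eq_one_of_consistent A hA0 hdiag⟩
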